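/- Let E > 0 and T_A > 2·T_B > 0. On (ℂ²)^{⊗3} with standard basis {e_b : b ∈ {0,1}^3}, let H be the diagonal Hamiltonian with H e_b = E · wgt(b) · e_b, and let ρ = γ_{T_A} ⊗ γ_{T_A} ⊗ γ_{T_B}, where γ_T = diag(1, e^{−E/T})/(1 + e^{−E/T}) (two hot qubits and one cold qubit with equal energy gaps). Let U be the permutation unitary exchanging e_{110} and e_{001} and fixing all other basis vectors. Then tr(U ρ U† H) < tr(ρ H). -/

import Mathlib

/-!
Conjugating the diagonal state by a permutation matrix permutes its diagonal, so the energy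
change only involves the two exchanged levels: it is `(p₁₁₀ - p₀₀₁) (E₀₀₁ - E₁₁₀) = -E (p₁₁₀ - p₀₀₁)`.
Factoring out the ground-state weights, `p₁₁₀ / p₀₀₁ = e^{-2E/T_A} / e^{-E/T_B}`, which exceeds
`1` precisely because `T_A > 2 T_B`.
-/

/-- The Gibbs occupation probability of level `j ∈ {0,1}` of a two-level
system with energy gap `E` at temperature `T`. -/
noncomputable def qubitProb (E T : ℝ) (j : Fin 2) : ℝ :=
  (if j = 0 then 1 else Real.exp (-E / T)) / (1 + Real.exp (-E / T))

open Matrix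

theorem Matrix.permMatrix_mul_diagonal_mul_star {n R : Type*} [Fintype n] [DecidableEq n]
    [Semiring R] [StarRing R] (σ : Equiv.Perm n) (d : n → R) :
    σ.permMatrix R * diagonal d * star (σ.permMatrix R) = diagonal (d ∘ σ) := by
  rw [star_eq_conjTranspose, conjTranspose_permMatrix, Matrix.mul_assoc,
    PEquiv.mul_toMatrix_toPEquiv, PEquiv.toMatrix_toPEquiv_mul]
  ext i j
  simp [diagonal, Equiv.eq_symm_apply]

theorem Matrix.re_trace_diagonal_ofReal_mul {n : Type*} [Fintype n] [DecidableEq n]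
    (a b : n → ℝ) :
    (trace (diagonal (fun i => (a i : ℂ)) * diagonal (fun i => (b i : ℂ)))).re =
      ∑ i, a i * b i := by
  simp [diagonal_mul_diagonal, trace_diagonal, Complex.re_sum]

theorem Equiv.sum_comp_swap_mul_sub_sum_mul {α R : Type*} [Fintype α] [DecidableEq α]
    [CommRing R] {x y : α} (hxy : x ≠ y) (f g : α → R) :
    ∑ b, f (Equiv.swap x y b) * g b - ∑ b, f b * g b = (f x - f y) * (g y - g x) := by
  rw [← Finset.sum_sub_distrib, Fintype.sum_eq_add x y hxy]
  · simp only [Equiv.swap_apply_left, Equiv.swap_apply_right]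
    ring
  · rintro b ⟨hbx, hby⟩
    rw [Equiv.swap_apply_of_ne_of_ne hbx hby, sub_self]

theorem qubitProb_one (E T : ℝ) :
    qubitProb E T 1 = Real.exp (-E / T) * qubitProb E T 0 := by
  simp [qubitProb, div_eq_mul_inv]

theorem qubitProb_zero_pos (E T : ℝ) : 0 < qubitProb E T 0 := by
  unfold qubitProb; positivity

theorem exp_neg_div_lt_exp_neg_div_sq {E T_A T_B : ℝ} (hE : 0 < E) (hTB : 0 < T_B)
    (hT : 2 * T_B < T_A) :
    Real.exp (-E / T_B) < Real.exp (-E / T_A) ^ 2 := by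
  have hTA : 0 < T_A := by linarith
  rw [sq, ← Real.exp_add, Real.exp_lt_exp, ← add_div, div_lt_div_iff₀ hTB hTA]
  nlinarith [mul_lt_mul_of_pos_left hT hE]

/-- On two hot qubits at `T_A` and one cold qubit at `T_B` with equal energy
gaps and `T_A > 2 T_B`, the permutation unitary exchanging the basis states
`110` and `001` strictly decreases the average energy. -/
theorem stmt_11 (E T_A T_B : ℝ) (hE : 0 < E) (hTB : 0 < T_B)
    (hT : 2 * T_B < T_A) :
    (Matrix.trace (
        ((Equiv.swap (![1, 1, 0] : Fin 3 → Fin 2) ![0, 0, 1]).permMatrix ℂ) *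
        Matrix.diagonal (fun b : Fin 3 → Fin 2 =>
          ((qubitProb E T_A (b 0) * qubitProb E T_A (b 1) *
            qubitProb E T_B (b 2) : ℝ) : ℂ)) *
        star ((Equiv.swap (![1, 1, 0] : Fin 3 → Fin 2) ![0, 0, 1]).permMatrix ℂ) *
        Matrix.diagonal (fun b : Fin 3 → Fin 2 =>
          ((E * ∑ i, ((b i : ℕ) : ℝ) : ℝ) : ℂ)))).re <
    (Matrix.trace (
        Matrix.diagonal (fun b : Fin 3 → Fin 2 =>
          ((qubitProb E T_A (b 0) * qubitProb E T_A (b 1) *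
            qubitProb E T_B (b 2) : ℝ) : ℂ)) *
        Matrix.diagonal (fun b : Fin 3 → Fin 2 =>
          ((E * ∑ i, ((b i : ℕ) : ℝ) : ℝ) : ℂ)))).re := by
  set p : (Fin 3 → Fin 2) → ℝ := fun b =>
    qubitProb E T_A (b 0) * qubitProb E T_A (b 1) * qubitProb E T_B (b 2)
  set h : (Fin 3 → Fin 2) → ℝ := fun b => E * ∑ i, ((b i : ℕ) : ℝ)
  have energy_change := Equiv.sum_comp_swap_mul_sub_sum_mul
    (x := ![1, 1, 0]) (y := ![0, 0, 1]) (by decide) p h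
  rw [Matrix.permMatrix_mul_diagonal_mul_star, Function.comp_def,
    re_trace_diagonal_ofReal_mul, re_trace_diagonal_ofReal_mul, ← sub_neg, energy_change]
  have hp : p ![0, 0, 1] < p ![1, 1, 0] := by
    simp only [p, Matrix.cons_val, qubitProb_one]
    calc _ = Real.exp (-E / T_B) * (qubitProb E T_A 0 ^ 2 * qubitProb E T_B 0) := by ring
      _ < Real.exp (-E / T_A) ^ 2 * (qubitProb E T_A 0 ^ 2 * qubitProb E T_B 0) :=
        mul_lt_mul_of_pos_right (exp_neg_div_lt_exp_neg_div_sq hE hTB hT)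
          (mul_pos (pow_pos (qubitProb_zero_pos E T_A) 2) (qubitProb_zero_pos E T_B))
      _ = _ := by ring
  have hh : h ![1, 1, 0] = h ![0, 0, 1] + E := by
    simp [h, Fin.sum_univ_three, mul_add]
  rw [hh, sub_add_cancel_left]
  exact mul_neg_of_pos_of_neg (sub_pos.2 hp) (neg_neg_of_pos hE)
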